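/- Let n be an even positive integer, let t be an integer with 1 ≤ t ≤ ⌊n/4⌋, and let S_1,…,S_t be a partition of {⌊3n/4⌋+1,…,n} into sets each of size at least t+1. Define f: {0,1}^n → {0,1} by f(x) = ((∏_{i=1}^{n/2} x_i) ⊕ (⊕_{r=1}^{t} ∏_{j∈S_r} x_j)) · ∏_{j=n/2+1}^{⌊3n/4⌋} x_j, where ⊕ is addition mod 2. Then every T-query quantum algorithm (with any number m of work qubits) that computes f exactly satisfies T ≥ ⌊3n/4⌋. -/

import Mathlib

/-!
Restrict to the subcube of inputs with `x_j = 0` for all `j ≥ ⌊3n/4⌋`. Every `S_r` contains such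
a coordinate, so each `S_r`-monomial vanishes there and `f` becomes the `AND` of the first
`⌊3n/4⌋` bits. By the polynomial method, after `T` queries every amplitude of `Π ψ_x` is a
function of Fourier degree at most `T` in `x`. Choosing an amplitude that is nonzero at the
all-ones corner of the subcube gives a function vanishing on the rest of the subcube, i.e. a
nonzero multiple of `AND` there; its correlation with the top character of the subcube is then
nonzero, which forces `T ≥ ⌊3n/4⌋`.
-/

open Matrix

/-- Index type for the Hilbert space `ℂ^{n+1} ⊗ (ℂ²)^{⊗ m}`:
a query-register basis index in `Fin (n+1)` together with the
computational-basis values of `m` work qubits. -/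
abbrev QIdx (n m : ℕ) : Type := Fin (n + 1) × (Fin m → ZMod 2)

/-- The phase oracle `O_x ⊗ I`: `e_0 ↦ e_0` and `e_i ↦ (−1)^{x_i} e_i`
for `1 ≤ i ≤ n`, acting as identity on the work qubits. -/
noncomputable def oracleMat (n m : ℕ) (x : Fin n → ZMod 2) :
    Matrix (QIdx n m) (QIdx n m) ℂ :=
  Matrix.diagonal fun p =>
    if h : (p.1 : ℕ) = 0 then 1
    else (-1 : ℂ) ^ (x ⟨(p.1 : ℕ) - 1, by have := p.1.isLt; omega⟩).val

/-- The total evolution `U_T (O_x⊗I) U_{T−1} (O_x⊗I) ⋯ U_1 (O_x⊗I) U_0`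
of a `T`-query algorithm. -/
noncomputable def algMat (n m : ℕ) (x : Fin n → ZMod 2) :
    (T : ℕ) → (Fin (T + 1) → Matrix (QIdx n m) (QIdx n m) ℂ) →
      Matrix (QIdx n m) (QIdx n m) ℂ
  | 0, U => U 0
  | T + 1, U => U (Fin.last (T + 1)) * oracleMat n m x *
      algMat n m x T fun i => U i.castSucc

/-- The initial state `e_0 ⊗ e_0^{⊗ m}`. -/
noncomputable def initVec (n m : ℕ) : QIdx n m → ℂ :=
  fun p => if p = ((0 : Fin (n + 1)), fun _ => (0 : ZMod 2)) then 1 else 0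

/-- The final state `ψ_x` of the algorithm on input `x`. -/
noncomputable def finalState (n m T : ℕ)
    (U : Fin (T + 1) → Matrix (QIdx n m) (QIdx n m) ℂ)
    (x : Fin n → ZMod 2) : QIdx n m → ℂ :=
  (algMat n m x T U).mulVec (initVec n m)

/-- There is a `T`-query exact quantum algorithm with `m` work qubits
computing `f`: unitaries `U_0, …, U_T` and an orthogonal projection `Π`
with `Π ψ_x = ψ_x` when `f x = 1` and `Π ψ_x = 0` when `f x = 0`. -/
def ComputesExactly (n m T : ℕ) (f : (Fin n → ZMod 2) → ZMod 2) : Prop :=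
  ∃ U : Fin (T + 1) → Matrix (QIdx n m) (QIdx n m) ℂ,
    (∀ i, U i ∈ Matrix.unitaryGroup (QIdx n m) ℂ) ∧
    ∃ P : Matrix (QIdx n m) (QIdx n m) ℂ,
      P.IsHermitian ∧ P * P = P ∧
        ∀ x : Fin n → ZMod 2,
          (f x = 1 → P.mulVec (finalState n m T U x) = finalState n m T U x) ∧
          (f x = 0 → P.mulVec (finalState n m T U x) = 0)

open Finset

namespace BooleanFourier

variable {ι : Type*}

lemma neg_one_pow_val_add_one (v : ZMod 2) : (-1 : ℂ) ^ (v + 1).val = -(-1 : ℂ) ^ v.val := by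
  obtain rfl | rfl : v = 0 ∨ v = 1 := by revert v; decide
  · simp [ZMod.val_one]
  · simp [show (1 + 1 : ZMod 2) = 0 from rfl, ZMod.val_one]

lemma neg_one_pow_mul_self (k : ℕ) : (-1 : ℂ) ^ k * (-1 : ℂ) ^ k = 1 := by
  rw [← mul_pow, neg_one_mul, neg_neg, one_pow]

noncomputable def walsh (A : Finset ι) (x : ι → ZMod 2) : ℂ :=
  ∏ i ∈ A, (-1 : ℂ) ^ (x i).val

lemma walsh_ne_zero (A : Finset ι) (x : ι → ZMod 2) : walsh A x ≠ 0 :=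
  prod_ne_zero_iff.2 fun _ _ => pow_ne_zero _ (neg_ne_zero.2 one_ne_zero)

variable (ι) in
noncomputable def walshDegreeLE (d : ℕ) : Submodule ℂ ((ι → ZMod 2) → ℂ) :=
  Submodule.span ℂ (walsh '' {A | #A ≤ d})

lemma walsh_mem_walshDegreeLE {d : ℕ} {A : Finset ι} (hA : #A ≤ d) :
    walsh A ∈ walshDegreeLE ι d :=
  Submodule.subset_span ⟨A, hA, rfl⟩

lemma walshDegreeLE_mono {d d' : ℕ} (h : d ≤ d') : walshDegreeLE ι d ≤ walshDegreeLE ι d' :=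
  Submodule.span_mono (Set.image_mono fun _ hA => le_trans hA h)

lemma const_mem_walshDegreeLE (d : ℕ) (c : ℂ) : (fun _ => c) ∈ walshDegreeLE ι d := by
  have h : (fun _ => c) = c • walsh (∅ : Finset ι) := by ext; simp [walsh]
  exact h ▸ Submodule.smul_mem _ c (walsh_mem_walshDegreeLE (Nat.zero_le d))

lemma mulVec_apply_mem_walshDegreeLE {κ : Type*} [Fintype κ] {d : ℕ}
    (M : Matrix κ κ ℂ) {ψ : (ι → ZMod 2) → κ → ℂ}
    (hψ : ∀ q, (fun x => ψ x q) ∈ walshDegreeLE ι d) (p : κ) :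
    (fun x => (M *ᵥ ψ x) p) ∈ walshDegreeLE ι d := by
  have h : (fun x => (M *ᵥ ψ x) p) = ∑ q, M p q • fun x => ψ x q := by
    ext x
    simp [mulVec, dotProduct]
  exact h ▸ Submodule.sum_mem _ fun q _ => Submodule.smul_mem _ _ (hψ q)

section DecidableEq

variable [DecidableEq ι]

lemma neg_one_pow_mul_walsh (i : ι) (A : Finset ι) :
    (fun x : ι → ZMod 2 => (-1 : ℂ) ^ (x i).val * walsh A x) =
      if i ∈ A then walsh (A.erase i) else walsh (insert i A) := by
  ext x
  split_ifs with hi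
  · rw [walsh, ← mul_prod_erase _ _ hi, ← mul_assoc, neg_one_pow_mul_self, one_mul, walsh]
  · rw [walsh, walsh, prod_insert hi]

lemma neg_one_pow_mul_mem_walshDegreeLE {d : ℕ} {g : (ι → ZMod 2) → ℂ} (i : ι)
    (hg : g ∈ walshDegreeLE ι d) :
    (fun x => (-1 : ℂ) ^ (x i).val * g x) ∈ walshDegreeLE ι (d + 1) := by
  let s : (ι → ZMod 2) → ℂ := fun x => (-1 : ℂ) ^ (x i).val
  suffices h : (walshDegreeLE ι d).map (LinearMap.mulLeft ℂ s) ≤ walshDegreeLE ι (d + 1) from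
    h ⟨g, hg, rfl⟩
  rw [walshDegreeLE, Submodule.map_span_le]
  rintro _ ⟨A, hA, rfl⟩
  change (fun x => s x * walsh A x) ∈ _
  rw [neg_one_pow_mul_walsh]
  split_ifs with hi
  · exact walsh_mem_walshDegreeLE (card_erase_le.trans (le_trans hA (Nat.le_succ d)))
  · exact walsh_mem_walshDegreeLE ((card_insert_le _ _).trans (Nat.succ_le_succ hA))

lemma walsh_add_single (A : Finset ι) (i : ι) (x : ι → ZMod 2) :
    walsh A (x + Pi.single i 1) = if i ∈ A then -walsh A x else walsh A x := by
  have hne : ∀ j ∈ A, j ≠ i →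
      (-1 : ℂ) ^ ((x + Pi.single i 1 : ι → ZMod 2) j).val = (-1) ^ (x j).val :=
    fun j _ hj => by rw [Pi.add_apply, Pi.single_eq_of_ne hj, add_zero]
  split_ifs with hi
  · rw [walsh, walsh, ← mul_prod_erase _ _ hi, ← mul_prod_erase _ _ hi,
      prod_congr rfl fun j hj => hne j (mem_of_mem_erase hj) (ne_of_mem_erase hj),
      Pi.add_apply, Pi.single_eq_same, neg_one_pow_val_add_one, neg_mul]
  · exact prod_congr rfl fun j hj => hne j hj (ne_of_mem_of_not_mem hj hi)

def onesOn (B : Finset ι) : ι → ZMod 2 :=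
  fun i => if i ∈ B then 1 else 0

lemma prod_onesOn (B : Finset ι) : ∏ i ∈ B, onesOn B i = 1 :=
  prod_eq_one fun _ hi => if_pos hi

end DecidableEq

section Subcube

variable [Fintype ι] [DecidableEq ι]

def subcube (B : Finset ι) : Finset (ι → ZMod 2) :=
  {x | ∀ j ∉ B, x j = 0}

lemma onesOn_mem_subcube (B : Finset ι) : onesOn B ∈ subcube B := by
  simp +contextual [subcube, onesOn]

lemma prod_eq_zero_of_mem_subcube {B : Finset ι} {x : ι → ZMod 2} (hx : x ∈ subcube B)
    (hne : x ≠ onesOn B) : ∏ i ∈ B, x i = 0 := by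
  obtain ⟨i, hi⟩ := Function.ne_iff.1 hne
  have hiB : i ∈ B := by
    by_contra hiB
    exact hi (by rw [(mem_filter.1 hx).2 i hiB, onesOn, if_neg hiB])
  have h01 : ∀ v : ZMod 2, v ≠ 1 → v = 0 := by decide
  rw [onesOn, if_pos hiB] at hi
  exact prod_eq_zero hiB (h01 _ hi)

lemma add_single_mem_subcube {B : Finset ι} {x : ι → ZMod 2} {i : ι} (hi : i ∈ B)
    (hx : x ∈ subcube B) : x + Pi.single i 1 ∈ subcube B := by
  simp only [subcube, mem_filter, mem_univ, true_and] at hx ⊢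
  intro j hj
  rw [Pi.add_apply, hx j hj, Pi.single_eq_of_ne (ne_of_mem_of_not_mem hi hj).symm, add_zero]

lemma sum_subcube_walsh_mul_walsh_eq_zero {A B : Finset ι} (hAB : ¬B ⊆ A) :
    ∑ x ∈ subcube B, walsh A x * walsh B x = 0 := by
  obtain ⟨i, hiB, hiA⟩ := not_subset.1 hAB
  refine sum_involution (fun x _ => x + Pi.single i 1) (fun x _ => ?_) (fun x _ _ => ?_)
    (fun x hx => add_single_mem_subcube hiB hx) (fun x _ => ?_)
  · rw [walsh_add_single, walsh_add_single, if_neg hiA, if_pos hiB]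
    ring
  · simp
  · rw [add_assoc, ← Pi.single_add, CharTwo.add_self_eq_zero, Pi.single_zero, add_zero]

lemma sum_subcube_mul_walsh_eq_zero {d : ℕ} {B : Finset ι} (hB : d < #B)
    {g : (ι → ZMod 2) → ℂ} (hg : g ∈ walshDegreeLE ι d) :
    ∑ x ∈ subcube B, g x * walsh B x = 0 := by
  induction hg using Submodule.span_induction with
  | mem _ h =>
    obtain ⟨A, hA, rfl⟩ := h
    have hA : #A ≤ d := hA
    exact sum_subcube_walsh_mul_walsh_eq_zero fun h => absurd (card_le_card h) (by omega)
  | zero => simp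
  | add g₁ g₂ _ _ h₁ h₂ => simp only [Pi.add_apply, add_mul, sum_add_distrib, h₁, h₂, add_zero]
  | smul c g _ h => simp only [Pi.smul_apply, smul_eq_mul, mul_assoc, ← mul_sum, h, mul_zero]

lemma sum_prod_eq_zero_of_mem_subcube {κ : Type*} [Fintype κ]
    {S : κ → Finset ι} {B : Finset ι} (hS : ∀ r, ∃ j ∈ S r, j ∉ B) {x : ι → ZMod 2}
    (hx : x ∈ subcube B) : ∑ r, ∏ j ∈ S r, x j = 0 :=
  sum_eq_zero fun r _ => by
    obtain ⟨j, hj, hjB⟩ := hS r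
    exact prod_eq_zero hj ((mem_filter.1 hx).2 j hjB)

-- The `AND` of `|B|` bits has degree `|B|`.
theorem apply_onesOn_eq_zero {d : ℕ} {B : Finset ι} (hB : d < #B)
    {g : (ι → ZMod 2) → ℂ} (hg : g ∈ walshDegreeLE ι d)
    (hvanish : ∀ x ∈ subcube B, x ≠ onesOn B → g x = 0) : g (onesOn B) = 0 := by
  have h := sum_subcube_mul_walsh_eq_zero hB hg
  rw [sum_eq_single_of_mem _ (onesOn_mem_subcube B)
    fun x hx hne => by rw [hvanish x hx hne, zero_mul]] at h
  exact (mul_eq_zero.1 h).resolve_right (walsh_ne_zero _ _)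

end Subcube

end BooleanFourier

namespace QueryAlgorithm

open BooleanFourier

variable {n m : ℕ}

lemma oracleMat_mulVec_zero (x : Fin n → ZMod 2) (v : QIdx n m → ℂ) (w : Fin m → ZMod 2) :
    (oracleMat n m x *ᵥ v) (0, w) = v (0, w) := by
  simp [oracleMat, mulVec_diagonal]

lemma oracleMat_mulVec_succ (x : Fin n → ZMod 2) (v : QIdx n m → ℂ) (i : Fin n)
    (w : Fin m → ZMod 2) :
    (oracleMat n m x *ᵥ v) (i.succ, w) = (-1 : ℂ) ^ (x i).val * v (i.succ, w) := by
  simp [oracleMat, mulVec_diagonal]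

lemma oracleMat_mul_self (x : Fin n → ZMod 2) : oracleMat n m x * oracleMat n m x = 1 := by
  rw [oracleMat, diagonal_mul_diagonal, ← diagonal_one]
  congr 1
  ext ⟨i, w⟩
  split_ifs
  · exact one_mul 1
  · exact neg_one_pow_mul_self _

lemma isUnit_algMat (x : Fin n → ZMod 2) {T : ℕ}
    {U : Fin (T + 1) → Matrix (QIdx n m) (QIdx n m) ℂ}
    (hU : ∀ i, U i ∈ unitaryGroup (QIdx n m) ℂ) : IsUnit (algMat n m x T U) := by
  induction T with
  | zero => exact Unitary.isUnit_coe (U := ⟨_, hU 0⟩)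
  | succ T ih =>
    exact ((Unitary.isUnit_coe (U := ⟨_, hU _⟩)).mul
      ⟨⟨_, _, oracleMat_mul_self x, oracleMat_mul_self x⟩, rfl⟩).mul (ih fun i => hU i.castSucc)

lemma finalState_ne_zero {T : ℕ} {U : Fin (T + 1) → Matrix (QIdx n m) (QIdx n m) ℂ}
    (hU : ∀ i, U i ∈ unitaryGroup (QIdx n m) ℂ) (x : Fin n → ZMod 2) :
    finalState n m T U x ≠ 0 := by
  rw [finalState, Ne, ← mulVec_zero (algMat n m x T U),
    (mulVec_injective_iff_isUnit.2 (isUnit_algMat x hU)).eq_iff]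
  intro h
  simpa [initVec] using congrFun h (0, fun _ => 0)

lemma finalState_succ (T : ℕ) (U : Fin (T + 2) → Matrix (QIdx n m) (QIdx n m) ℂ)
    (x : Fin n → ZMod 2) :
    finalState n m (T + 1) U x =
      U (Fin.last _) *ᵥ (oracleMat n m x *ᵥ finalState n m T (fun i => U i.castSucc) x) := by
  simp only [finalState, algMat, mulVec_mulVec, Matrix.mul_assoc]

lemma oracleMat_mulVec_apply_mem_walshDegreeLE {d : ℕ} {ψ : (Fin n → ZMod 2) → QIdx n m → ℂ}
    (hψ : ∀ q, (fun x => ψ x q) ∈ walshDegreeLE (Fin n) d) (q : QIdx n m) :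
    (fun x => (oracleMat n m x *ᵥ ψ x) q) ∈ walshDegreeLE (Fin n) (d + 1) := by
  obtain ⟨j, w⟩ := q
  cases j using Fin.cases with
  | zero =>
    simp only [oracleMat_mulVec_zero]
    exact walshDegreeLE_mono (Nat.le_succ d) (hψ _)
  | succ i =>
    simp only [oracleMat_mulVec_succ]
    exact neg_one_pow_mul_mem_walshDegreeLE i (hψ _)

-- The polynomial method of Beals, Buhrman, Cleve, Mosca and de Wolf.
theorem finalState_apply_mem_walshDegreeLE {T : ℕ}
    (U : Fin (T + 1) → Matrix (QIdx n m) (QIdx n m) ℂ) (p : QIdx n m) :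
    (fun x => finalState n m T U x p) ∈ walshDegreeLE (Fin n) T := by
  induction T generalizing p with
  | zero => exact const_mem_walshDegreeLE 0 ((U 0 *ᵥ initVec n m) p)
  | succ T ih =>
    simp only [finalState_succ]
    exact mulVec_apply_mem_walshDegreeLE _
      (oracleMat_mulVec_apply_mem_walshDegreeLE fun q => ih _ q) p

end QueryAlgorithm

open BooleanFourier QueryAlgorithm

lemma prod_filter_lt_mul_prod_filter_Ico {M : Type*} [CommMonoid M] {n a b : ℕ} (hab : a ≤ b)
    (x : Fin n → M) :
    (∏ i ∈ univ.filter fun i : Fin n => (i : ℕ) < a, x i) *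
        ∏ i ∈ univ.filter fun i : Fin n => a ≤ (i : ℕ) ∧ (i : ℕ) < b, x i =
      ∏ i ∈ univ.filter fun i : Fin n => (i : ℕ) < b, x i := by
  rw [← prod_union (disjoint_filter.2 fun i _ h => by omega)]
  congr 1
  ext i
  simp only [mem_union, mem_filter, mem_univ, true_and]
  omega

theorem stmt9_general (n t : ℕ)
    (S : Fin t → Finset (Fin n))
    (hcard : ∀ i, t + 1 ≤ (S i).card)
    (hcover : Finset.univ.biUnion S
      = Finset.univ.filter fun i : Fin n => 3 * n / 4 ≤ (i : ℕ))
    (f : (Fin n → ZMod 2) → ZMod 2)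
    (hf : ∀ x, f x =
        ((∏ i ∈ Finset.univ.filter fun i : Fin n => (i : ℕ) < n / 2, x i)
            + ∑ r : Fin t, ∏ j ∈ S r, x j)
          * ∏ j ∈ Finset.univ.filter
              fun j : Fin n => n / 2 ≤ (j : ℕ) ∧ (j : ℕ) < 3 * n / 4, x j) :
    ∀ m T : ℕ, ComputesExactly n m T f → 3 * n / 4 ≤ T := by
  rintro m T ⟨U, hU, P, -, -, hP⟩
  by_contra! hT
  set B : Finset (Fin n) := univ.filter fun i : Fin n => (i : ℕ) < 3 * n / 4
  have hS : ∀ r, ∃ j ∈ S r, j ∉ B := fun r => by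
    obtain ⟨j, hj⟩ := card_pos.1 (by have := hcard r; omega : 0 < #(S r))
    have hj' := hcover ▸ mem_biUnion.2 ⟨r, mem_univ r, hj⟩
    exact ⟨j, hj, by simp only [B, mem_filter, mem_univ, true_and] at hj' ⊢; omega⟩
  have hfB : ∀ x ∈ subcube B, f x = ∏ i ∈ B, x i := fun x hx => by
    rw [hf, sum_prod_eq_zero_of_mem_subcube hS hx, add_zero,
      prod_filter_lt_mul_prod_filter_Ico (by omega)]
  have hBcard : #B = 3 * n / 4 := by
    rw [Fin.card_filter_val_lt]; omega
  obtain ⟨p, hp⟩ := Function.ne_iff.1 (finalState_ne_zero hU (onesOn B))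
  rw [← (hP _).1 ((hfB _ (onesOn_mem_subcube B)).trans (prod_onesOn B))] at hp
  exact hp <| apply_onesOn_eq_zero (g := fun x => (P *ᵥ finalState n m T U x) p) (hBcard ▸ hT)
    (mulVec_apply_mem_walshDegreeLE P (finalState_apply_mem_walshDegreeLE U) p)
    fun x hx hne => by
      rw [(hP x).2 ((hfB x hx).trans (prod_eq_zero_of_mem_subcube hx hne))]
      rfl

/-- For even `n`, `1 ≤ t ≤ ⌊n/4⌋`, and a partition `S_1,…,S_t` of
`{⌊3n/4⌋+1,…,n}` into sets of size at least `t+1`, every exact quantum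
algorithm computing
`f(x) = ((∏_{i=1}^{n/2} x_i) ⊕ (⊕_r ∏_{j∈S_r} x_j)) · ∏_{j=n/2+1}^{⌊3n/4⌋} x_j`
makes at least `⌊3n/4⌋` queries. -/
theorem stmt9 (n t : ℕ) (hn : 0 < n) (heven : n % 2 = 0)
    (ht1 : 1 ≤ t) (ht2 : t ≤ n / 4)
    (S : Fin t → Finset (Fin n))
    (hdisj : ∀ i j : Fin t, i ≠ j → Disjoint (S i) (S j))
    (hcard : ∀ i, t + 1 ≤ (S i).card)
    (hcover : Finset.univ.biUnion S
      = Finset.univ.filter fun i : Fin n => 3 * n / 4 ≤ (i : ℕ))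
    (f : (Fin n → ZMod 2) → ZMod 2)
    (hf : ∀ x, f x =
        ((∏ i ∈ Finset.univ.filter fun i : Fin n => (i : ℕ) < n / 2, x i)
            + ∑ r : Fin t, ∏ j ∈ S r, x j)
          * ∏ j ∈ Finset.univ.filter
              fun j : Fin n => n / 2 ≤ (j : ℕ) ∧ (j : ℕ) < 3 * n / 4, x j) :
    ∀ m T : ℕ, ComputesExactly n m T f → 3 * n / 4 ≤ T :=
  stmt9_general n t S hcard hcover f hf
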